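/- Let β > 0, κ ≥ 0, τ > 0 and L > 0 be real numbers. Let M_Ω ∈ ℝ^{n_Ω×n_Ω} and M_Γ ∈ ℝ^{n_Γ×n_Γ} be diagonal matrices with positive diagonal entries, and let L_Ω ∈ ℝ^{n_Ω×n_Ω} and L_Γ ∈ ℝ^{n_Γ×n_Γ} be symmetric positive semidefinite. Let F₁, F₂, G₁, G₂ : ℝ → ℝ be differentiable with F₁, G₁ convex and F₂, G₂ concave, and set F = F₁ + F₂, G = G₁ + G₂. Suppose U, U⁻, μ ∈ ℝ^{n_Ω} and θ ∈ ℝ^{n_Γ} satisfy: (i) M_Ω(U − U⁻) + τ·L_Ω·μ − τ·L⁻¹·ext(M_Γ·(βθ − μ|_Γ)) = 0; (ii) M_Γ(U|_Γ − U⁻|_Γ) + τ·L_Γ·θ + τ·β·L⁻¹·M_Γ·(βθ − μ|_Γ) = 0; (iii) M_Ω·μ + ext(M_Γ·θ) = L_Ω·U + κ·ext(L_Γ·(U|_Γ)) + M_Ω·(F₁′(U) + F₂′(U⁻)) + ext(M_Γ·(G₁′(U|_Γ) + G₂′(U⁻|_Γ))), where the derivatives are applied entrywise. Then the discrete energy inequality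 holds: (1/2)·UᵀL_Ω U + (1/2)·(U − U⁻)ᵀL_Ω(U − U⁻) + (κ/2)·(U|_Γ)ᵀL_Γ(U|_Γ) + (κ/2)·(U|_Γ − U⁻|_Γ)ᵀL_Γ(U|_Γ − U⁻|_Γ) + 𝟙ᵀM_Ω·F(U) + 𝟙ᵀM_Γ·G(U|_Γ) + τ·μᵀL_Ω μ + τ·θᵀL_Γ θ + τ·L⁻¹·(βθ − μ|_Γ)ᵀM_Γ(βθ − μ|_Γ) ≤ (1/2)·(U⁻)ᵀL_Ω U⁻ + (κ/2)·(U⁻|_Γ)ᵀL_Γ(U⁻|_Γ) + 𝟙ᵀM_Ω·F(U⁻) + 𝟙ᵀM_Γ·G(U⁻|_Γ). -/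

import Mathlib

/-!
Test the bulk equation with `μ`, the boundary equation with `θ` and the chemical potential
equation with `U - U'`. In the sum the two coupling terms, `μ|_Γᵀ M_Γ w` and `β θᵀ M_Γ w` with
`w = βθ - μ|_Γ`, combine into the reaction dissipation `L⁻¹ wᵀ M_Γ w`, and for the symmetric
stiffness matrices the polarisation `2 (U - U')ᵀ A U = Uᵀ A U - U'ᵀ A U' + (U - U')ᵀ A (U - U')`
turns the result into an exact energy identity, valid for any nonlinear terms. The potentials are
then handled node by node: the convex part is linearised at the new value and the concave part at
the old one, so `F(U) - F(U') ≤ (F₁'(U) + F₂'(U'))(U - U')`, and the lumped masses are positive.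
-/

open Matrix

/-- Restriction of a bulk vector (indexed by `Fin nΓ ⊕ Fin nI`, boundary
coordinates first) to its boundary coordinates. -/
def restrΓ {nΓ nI : ℕ} (v : Fin nΓ ⊕ Fin nI → ℝ) : Fin nΓ → ℝ := fun i => v (Sum.inl i)

/-- Extension of a boundary vector by zero in the interior coordinates. -/
def extΩ {nΓ nI : ℕ} (x : Fin nΓ → ℝ) : Fin nΓ ⊕ Fin nI → ℝ := Sum.elim x 0

lemma ConvexOn.add_deriv_mul_sub_le {S : Set ℝ} {f : ℝ → ℝ} (hf : ConvexOn ℝ S f)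
    {x y : ℝ} (hx : x ∈ S) (hy : y ∈ S) (hfx : DifferentiableAt ℝ f x) :
    f x + deriv f x * (y - x) ≤ f y := by
  rcases lt_trichotomy x y with hxy | rfl | hyx
  · have h := hf.deriv_le_slope hx hy hxy hfx
    rw [slope_def_field, le_div_iff₀ (sub_pos.mpr hxy)] at h
    linarith
  · simp
  · have h := hf.slope_le_deriv hy hx hyx hfx
    rw [slope_def_field, div_le_iff₀ (sub_pos.mpr hyx)] at h
    linarith

lemma ConcaveOn.le_add_deriv_mul_sub {S : Set ℝ} {f : ℝ → ℝ} (hf : ConcaveOn ℝ S f)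
    {x y : ℝ} (hx : x ∈ S) (hy : y ∈ S) (hfx : DifferentiableAt ℝ f x) :
    f y ≤ f x + deriv f x * (y - x) := by
  have h := hf.neg.add_deriv_mul_sub_le hx hy hfx.neg
  rw [deriv.neg] at h
  simp only [Pi.neg_apply] at h
  linarith

lemma convex_concave_split_le {S : Set ℝ} {F₁ F₂ : ℝ → ℝ}
    (hF₁ : ConvexOn ℝ S F₁) (hF₂ : ConcaveOn ℝ S F₂) {x y : ℝ} (hx : x ∈ S) (hy : y ∈ S)
    (hF₁y : DifferentiableAt ℝ F₁ y) (hF₂x : DifferentiableAt ℝ F₂ x) :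
    F₁ y + F₂ y ≤ F₁ x + F₂ x + (deriv F₁ y + deriv F₂ x) * (y - x) := by
  have h₁ := hF₁.add_deriv_mul_sub_le hy hx hF₁y
  have h₂ := hF₂.le_add_deriv_mul_sub hx hy hF₂x
  linarith

lemma diagonal_convex_concave_split_le {ι : Type*} [Fintype ι] [DecidableEq ι]
    {d : ι → ℝ} (hd : ∀ i, 0 ≤ d i) {F₁ F₂ : ℝ → ℝ}
    (hF₁ : ConvexOn ℝ Set.univ F₁) (hF₂ : ConcaveOn ℝ Set.univ F₂)
    (hF₁d : Differentiable ℝ F₁) (hF₂d : Differentiable ℝ F₂) (V V' : ι → ℝ) :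
    (fun _ => (1 : ℝ)) ⬝ᵥ diagonal d *ᵥ (fun i => F₁ (V i) + F₂ (V i))
      ≤ (fun _ => (1 : ℝ)) ⬝ᵥ diagonal d *ᵥ (fun i => F₁ (V' i) + F₂ (V' i))
        + (V - V') ⬝ᵥ diagonal d *ᵥ (fun i => deriv F₁ (V i) + deriv F₂ (V' i)) := by
  simp only [dotProduct, mulVec_diagonal, one_mul, Pi.sub_apply, ← Finset.sum_add_distrib]
  refine Finset.sum_le_sum fun i _ => ?_
  have h := mul_le_mul_of_nonneg_left (convex_concave_split_le hF₁ hF₂ (Set.mem_univ (V' i))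
    (Set.mem_univ (V i)) (hF₁d (V i)) (hF₂d (V' i))) (hd i)
  linarith

namespace Matrix.IsSymm

variable {ι R : Type*} [Fintype ι] [CommRing R] {A : Matrix ι ι R}

lemma dotProduct_mulVec_comm (hA : A.IsSymm) (x y : ι → R) :
    x ⬝ᵥ A *ᵥ y = y ⬝ᵥ A *ᵥ x := by
  rw [dotProduct_mulVec, ← mulVec_transpose, hA.eq, dotProduct_comm]

lemma two_mul_sub_dotProduct_mulVec (hA : A.IsSymm) (x y : ι → R) :
    2 * ((x - y) ⬝ᵥ A *ᵥ x)
      = x ⬝ᵥ A *ᵥ x - y ⬝ᵥ A *ᵥ y + (x - y) ⬝ᵥ A *ᵥ (x - y) := by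
  have h := hA.dotProduct_mulVec_comm x y
  simp only [mulVec_sub, sub_dotProduct, dotProduct_sub]
  linear_combination h

end Matrix.IsSymm

section FiniteElement

variable {nΓ nI : ℕ}

lemma dotProduct_extΩ (v : Fin nΓ ⊕ Fin nI → ℝ) (x : Fin nΓ → ℝ) :
    v ⬝ᵥ extΩ x = restrΓ v ⬝ᵥ x := by
  simp [dotProduct, Fintype.sum_sum_type, extΩ, restrΓ]

lemma restrΓ_sub (u w : Fin nΓ ⊕ Fin nI → ℝ) : restrΓ (u - w) = restrΓ u - restrΓ w := rfl

theorem energy_identity {β κ τ L : ℝ}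
    {MΩ LΩ : Matrix (Fin nΓ ⊕ Fin nI) (Fin nΓ ⊕ Fin nI) ℝ} {MΓ LΓ : Matrix (Fin nΓ) (Fin nΓ) ℝ}
    (hMΩ : MΩ.IsSymm) (hMΓ : MΓ.IsSymm) (hLΩ : LΩ.IsSymm) (hLΓ : LΓ.IsSymm)
    {U U' μ φ : Fin nΓ ⊕ Fin nI → ℝ} {θ ψ : Fin nΓ → ℝ}
    (hbulk : MΩ *ᵥ (U - U') + τ • LΩ *ᵥ μ - (τ * L⁻¹) • extΩ (MΓ *ᵥ (β • θ - restrΓ μ)) = 0)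
    (hbdry : MΓ *ᵥ (restrΓ U - restrΓ U') + τ • LΓ *ᵥ θ
        + (τ * β * L⁻¹) • MΓ *ᵥ (β • θ - restrΓ μ) = 0)
    (hpot : MΩ *ᵥ μ + extΩ (MΓ *ᵥ θ)
        = LΩ *ᵥ U + κ • extΩ (LΓ *ᵥ restrΓ U) + MΩ *ᵥ φ + extΩ (MΓ *ᵥ ψ)) :
    (1 / 2) * (U ⬝ᵥ LΩ *ᵥ U) + (1 / 2) * ((U - U') ⬝ᵥ LΩ *ᵥ (U - U'))
      + (κ / 2) * (restrΓ U ⬝ᵥ LΓ *ᵥ restrΓ U)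
      + (κ / 2) * ((restrΓ U - restrΓ U') ⬝ᵥ LΓ *ᵥ (restrΓ U - restrΓ U'))
      + τ * (μ ⬝ᵥ LΩ *ᵥ μ) + τ * (θ ⬝ᵥ LΓ *ᵥ θ)
      + τ * L⁻¹ * ((β • θ - restrΓ μ) ⬝ᵥ MΓ *ᵥ (β • θ - restrΓ μ))
      + (U - U') ⬝ᵥ MΩ *ᵥ φ + (restrΓ U - restrΓ U') ⬝ᵥ MΓ *ᵥ ψ
    = (1 / 2) * (U' ⬝ᵥ LΩ *ᵥ U') + (κ / 2) * (restrΓ U' ⬝ᵥ LΓ *ᵥ restrΓ U') := by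
  set w := β • θ - restrΓ μ
  have bulk_μ : μ ⬝ᵥ MΩ *ᵥ (U - U') + τ * (μ ⬝ᵥ LΩ *ᵥ μ)
      - τ * L⁻¹ * (restrΓ μ ⬝ᵥ MΓ *ᵥ w) = 0 := by
    have h := congrArg (μ ⬝ᵥ ·) hbulk
    simp only [dotProduct_add, dotProduct_sub, dotProduct_smul, smul_eq_mul, dotProduct_zero,
      dotProduct_extΩ] at h
    linear_combination h
  have bdry_θ : θ ⬝ᵥ MΓ *ᵥ (restrΓ U - restrΓ U') + τ * (θ ⬝ᵥ LΓ *ᵥ θ)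
      + τ * β * L⁻¹ * (θ ⬝ᵥ MΓ *ᵥ w) = 0 := by
    have h := congrArg (θ ⬝ᵥ ·) hbdry
    simp only [dotProduct_add, dotProduct_smul, smul_eq_mul, dotProduct_zero] at h
    linear_combination h
  have pot_dU : (U - U') ⬝ᵥ MΩ *ᵥ μ + (restrΓ U - restrΓ U') ⬝ᵥ MΓ *ᵥ θ
      = (U - U') ⬝ᵥ LΩ *ᵥ U + κ * ((restrΓ U - restrΓ U') ⬝ᵥ LΓ *ᵥ restrΓ U)
        + (U - U') ⬝ᵥ MΩ *ᵥ φ + (restrΓ U - restrΓ U') ⬝ᵥ MΓ *ᵥ ψ := by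
    have h := congrArg ((U - U') ⬝ᵥ ·) hpot
    simp only [dotProduct_add, dotProduct_smul, smul_eq_mul, dotProduct_extΩ, restrΓ_sub] at h
    linear_combination h
  have hw : w ⬝ᵥ MΓ *ᵥ w = β * (θ ⬝ᵥ MΓ *ᵥ w) - restrΓ μ ⬝ᵥ MΓ *ᵥ w := by
    simp only [w, sub_dotProduct, smul_dotProduct, smul_eq_mul]
  linear_combination bulk_μ + bdry_θ - pot_dU + τ * L⁻¹ * hw
    - hMΩ.dotProduct_mulVec_comm μ (U - U')
    - hMΓ.dotProduct_mulVec_comm θ (restrΓ U - restrΓ U')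
    - (1 / 2) * hLΩ.two_mul_sub_dotProduct_mulVec U U'
    - (κ / 2) * hLΓ.two_mul_sub_dotProduct_mulVec (restrΓ U) (restrΓ U')

end FiniteElement

theorem discrete_energy_inequality_general (nΓ nI : ℕ)
    (β κ τ L : ℝ)
    (MΩ : Matrix (Fin nΓ ⊕ Fin nI) (Fin nΓ ⊕ Fin nI) ℝ)
    (dΩ : Fin nΓ ⊕ Fin nI → ℝ) (hdΩ : ∀ i, 0 < dΩ i) (hMΩ : MΩ = Matrix.diagonal dΩ)
    (MΓ : Matrix (Fin nΓ) (Fin nΓ) ℝ)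
    (dΓ : Fin nΓ → ℝ) (hdΓ : ∀ i, 0 < dΓ i) (hMΓ : MΓ = Matrix.diagonal dΓ)
    (LΩ : Matrix (Fin nΓ ⊕ Fin nI) (Fin nΓ ⊕ Fin nI) ℝ) (hLΩ : LΩ.PosSemidef)
    (LΓ : Matrix (Fin nΓ) (Fin nΓ) ℝ) (hLΓ : LΓ.PosSemidef)
    (F₁ F₂ G₁ G₂ : ℝ → ℝ)
    (hF₁d : Differentiable ℝ F₁) (hF₂d : Differentiable ℝ F₂)
    (hG₁d : Differentiable ℝ G₁) (hG₂d : Differentiable ℝ G₂)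
    (hF₁c : ConvexOn ℝ Set.univ F₁) (hG₁c : ConvexOn ℝ Set.univ G₁)
    (hF₂c : ConcaveOn ℝ Set.univ F₂) (hG₂c : ConcaveOn ℝ Set.univ G₂)
    (U U' μ : Fin nΓ ⊕ Fin nI → ℝ) (θ : Fin nΓ → ℝ)
    -- (i) bulk evolution equation
    (hbulk : MΩ.mulVec (U - U') + τ • LΩ.mulVec μ
        - (τ * L⁻¹) • extΩ (MΓ.mulVec (β • θ - restrΓ μ)) = 0)
    -- (ii) boundary evolution equation
    (hbdry : MΓ.mulVec (restrΓ U - restrΓ U') + τ • LΓ.mulVec θ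
        + (τ * β * L⁻¹) • MΓ.mulVec (β • θ - restrΓ μ) = 0)
    -- (iii) the discrete chemical potential equation
    (hpot : MΩ.mulVec μ + extΩ (MΓ.mulVec θ)
        = LΩ.mulVec U + κ • extΩ (LΓ.mulVec (restrΓ U))
          + MΩ.mulVec (fun i => deriv F₁ (U i) + deriv F₂ (U' i))
          + extΩ (MΓ.mulVec (fun i => deriv G₁ (restrΓ U i) + deriv G₂ (restrΓ U' i)))) :
    (1 / 2) * (U ⬝ᵥ LΩ.mulVec U)
      + (1 / 2) * ((U - U') ⬝ᵥ LΩ.mulVec (U - U'))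
      + (κ / 2) * (restrΓ U ⬝ᵥ LΓ.mulVec (restrΓ U))
      + (κ / 2) * ((restrΓ U - restrΓ U') ⬝ᵥ LΓ.mulVec (restrΓ U - restrΓ U'))
      + (fun _ => (1 : ℝ)) ⬝ᵥ MΩ.mulVec (fun i => F₁ (U i) + F₂ (U i))
      + (fun _ => (1 : ℝ)) ⬝ᵥ MΓ.mulVec (fun i => G₁ (restrΓ U i) + G₂ (restrΓ U i))
      + τ * (μ ⬝ᵥ LΩ.mulVec μ) + τ * (θ ⬝ᵥ LΓ.mulVec θ)
      + τ * L⁻¹ * ((β • θ - restrΓ μ) ⬝ᵥ MΓ.mulVec (β • θ - restrΓ μ))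
    ≤ (1 / 2) * (U' ⬝ᵥ LΩ.mulVec U')
      + (κ / 2) * (restrΓ U' ⬝ᵥ LΓ.mulVec (restrΓ U'))
      + (fun _ => (1 : ℝ)) ⬝ᵥ MΩ.mulVec (fun i => F₁ (U' i) + F₂ (U' i))
      + (fun _ => (1 : ℝ)) ⬝ᵥ MΓ.mulVec (fun i => G₁ (restrΓ U' i) + G₂ (restrΓ U' i)) := by
  subst hMΩ hMΓ
  have identity := energy_identity (isSymm_diagonal dΩ) (isSymm_diagonal dΓ)
    (isHermitian_iff_isSymm.mp hLΩ.isHermitian) (isHermitian_iff_isSymm.mp hLΓ.isHermitian)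
    hbulk hbdry hpot
  have bulk_potential := diagonal_convex_concave_split_le (fun i => (hdΩ i).le)
    hF₁c hF₂c hF₁d hF₂d U U'
  have surface_potential := diagonal_convex_concave_split_le (fun i => (hdΓ i).le)
    hG₁c hG₂c hG₁d hG₂d (restrΓ U) (restrΓ U')
  linarith

/-- Lemma 5.4 of the paper, case `L > 0`: the discrete
energy inequality for one time step of the finite element scheme for the
Cahn--Hilliard system with reaction rate dependent dynamic boundary
conditions, including the reaction dissipation term
`τ·L⁻¹·(βθ − μ|_Γ)ᵀ M_Γ (βθ − μ|_Γ)`. -/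
theorem discrete_energy_inequality (nΓ nI : ℕ) (hnΓ : 1 ≤ nΓ)
    (β κ τ L : ℝ) (hβ : 0 < β) (hκ : 0 ≤ κ) (hτ : 0 < τ) (hL : 0 < L)
    (MΩ : Matrix (Fin nΓ ⊕ Fin nI) (Fin nΓ ⊕ Fin nI) ℝ)
    (dΩ : Fin nΓ ⊕ Fin nI → ℝ) (hdΩ : ∀ i, 0 < dΩ i) (hMΩ : MΩ = Matrix.diagonal dΩ)
    (MΓ : Matrix (Fin nΓ) (Fin nΓ) ℝ)
    (dΓ : Fin nΓ → ℝ) (hdΓ : ∀ i, 0 < dΓ i) (hMΓ : MΓ = Matrix.diagonal dΓ)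
    (LΩ : Matrix (Fin nΓ ⊕ Fin nI) (Fin nΓ ⊕ Fin nI) ℝ) (hLΩ : LΩ.PosSemidef)
    (LΓ : Matrix (Fin nΓ) (Fin nΓ) ℝ) (hLΓ : LΓ.PosSemidef)
    (F₁ F₂ G₁ G₂ : ℝ → ℝ)
    (hF₁d : Differentiable ℝ F₁) (hF₂d : Differentiable ℝ F₂)
    (hG₁d : Differentiable ℝ G₁) (hG₂d : Differentiable ℝ G₂)
    (hF₁c : ConvexOn ℝ Set.univ F₁) (hG₁c : ConvexOn ℝ Set.univ G₁)
    (hF₂c : ConcaveOn ℝ Set.univ F₂) (hG₂c : ConcaveOn ℝ Set.univ G₂)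
    (U U' μ : Fin nΓ ⊕ Fin nI → ℝ) (θ : Fin nΓ → ℝ)
    -- (i) bulk evolution equation
    (hbulk : MΩ.mulVec (U - U') + τ • LΩ.mulVec μ
        - (τ * L⁻¹) • extΩ (MΓ.mulVec (β • θ - restrΓ μ)) = 0)
    -- (ii) boundary evolution equation
    (hbdry : MΓ.mulVec (restrΓ U - restrΓ U') + τ • LΓ.mulVec θ
        + (τ * β * L⁻¹) • MΓ.mulVec (β • θ - restrΓ μ) = 0)
    -- (iii) the discrete chemical potential equation
    (hpot : MΩ.mulVec μ + extΩ (MΓ.mulVec θ)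
        = LΩ.mulVec U + κ • extΩ (LΓ.mulVec (restrΓ U))
          + MΩ.mulVec (fun i => deriv F₁ (U i) + deriv F₂ (U' i))
          + extΩ (MΓ.mulVec (fun i => deriv G₁ (restrΓ U i) + deriv G₂ (restrΓ U' i)))) :
    (1 / 2) * (U ⬝ᵥ LΩ.mulVec U)
      + (1 / 2) * ((U - U') ⬝ᵥ LΩ.mulVec (U - U'))
      + (κ / 2) * (restrΓ U ⬝ᵥ LΓ.mulVec (restrΓ U))
      + (κ / 2) * ((restrΓ U - restrΓ U') ⬝ᵥ LΓ.mulVec (restrΓ U - restrΓ U'))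
      + (fun _ => (1 : ℝ)) ⬝ᵥ MΩ.mulVec (fun i => F₁ (U i) + F₂ (U i))
      + (fun _ => (1 : ℝ)) ⬝ᵥ MΓ.mulVec (fun i => G₁ (restrΓ U i) + G₂ (restrΓ U i))
      + τ * (μ ⬝ᵥ LΩ.mulVec μ) + τ * (θ ⬝ᵥ LΓ.mulVec θ)
      + τ * L⁻¹ * ((β • θ - restrΓ μ) ⬝ᵥ MΓ.mulVec (β • θ - restrΓ μ))
    ≤ (1 / 2) * (U' ⬝ᵥ LΩ.mulVec U')
      + (κ / 2) * (restrΓ U' ⬝ᵥ LΓ.mulVec (restrΓ U'))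
      + (fun _ => (1 : ℝ)) ⬝ᵥ MΩ.mulVec (fun i => F₁ (U' i) + F₂ (U' i))
      + (fun _ => (1 : ℝ)) ⬝ᵥ MΓ.mulVec (fun i => G₁ (restrΓ U' i) + G₂ (restrΓ U' i)) :=
  discrete_energy_inequality_general nΓ nI β κ τ L MΩ dΩ hdΩ hMΩ MΓ dΓ hdΓ hMΓ LΩ hLΩ LΓ hLΓ F₁ F₂
    G₁ G₂ hF₁d hF₂d hG₁d hG₂d hF₁c hG₁c hF₂c hG₂c U U' μ θ hbulk hbdry hpot
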